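/- arXiv:1603.05356 — 3 statements merged into one kernel-verified Lean document; each statement's English description precedes it below -/
import Mathlib

section
/- Let b₁, b₂, α ∈ ℝ with |α| < 1, b₁ ≠ 0 and b₁ - α·b₂ ≠ 0. Define s = (b₂ - α·b₁)/(b₁ - α·b₂) and r = b₂/b₁. Then |b₁ + s·b₂| / √(1 + 2αs + s²) = |b₁| · √(1 + (r - α)²/(1 - α²)). -/
/-! Both sides are square roots of `(b₁² - 2αb₁b₂ + b₂²) / (1 - α²)`. On the left, clearing the
denominator `d = b₁ - αb₂` gives `b₁ + s b₂ = (b₁² - 2αb₁b₂ + b₂²) / d` and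
`1 + 2αs + s² = (1 - α²)(b₁² - 2αb₁b₂ + b₂²) / d²`; on the right, `b₁² (1 - α²) + (b₂ - αb₁)²`
is the same quadratic form. -/

lemma one_add_two_mul_add_sq_pos {α : ℝ} (hα : |α| < 1) (s : ℝ) :
    0 < 1 + 2 * α * s + s ^ 2 := by
  have : α ^ 2 < 1 := sq_lt_one_iff_abs_lt_one α |>.mpr hα
  nlinarith [sq_nonneg (s + α)]

lemma abs_div_sqrt_eq_sqrt {x y c : ℝ} (hy : y ≠ 0) (h : x ^ 2 = c * y) : |x| / √y = √c := by
  rw [← Real.sqrt_sq_eq_abs, ← Real.sqrt_div (sq_nonneg x), h, mul_div_cancel_right₀ _ hy]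

section

variable {α b₁ b₂ : ℝ}

lemma sq_add_div_mul_eq (hα : 1 - α ^ 2 ≠ 0) (hd : b₁ - α * b₂ ≠ 0) {s : ℝ}
    (hs : s = (b₂ - α * b₁) / (b₁ - α * b₂)) :
    (b₁ + s * b₂) ^ 2
      = (b₁ ^ 2 - 2 * α * b₁ * b₂ + b₂ ^ 2) / (1 - α ^ 2) * (1 + 2 * α * s + s ^ 2) := by
  subst hs
  -- `field_simp` normalizes the denominator to this form before looking for its nonvanishing
  have hd' : b₁ - b₂ * α ≠ 0 := by rwa [mul_comm]
  field_simp
  ring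

lemma sq_mul_one_add_div (hα : 1 - α ^ 2 ≠ 0) (hb₁ : b₁ ≠ 0) :
    b₁ ^ 2 * (1 + (b₂ / b₁ - α) ^ 2 / (1 - α ^ 2))
      = (b₁ ^ 2 - 2 * α * b₁ * b₂ + b₂ ^ 2) / (1 - α ^ 2) := by
  field_simp
  ring

end

/-- the scalar identity
`|b₁ + s b₂| / √(1 + 2αs + s²) = |b₁| √(1 + (r - α)²/(1 - α²))`
for `s = (b₂ - α b₁)/(b₁ - α b₂)` and `r = b₂/b₁`. -/
theorem sap_fs_identity (b₁ b₂ α : ℝ) (hα : |α| < 1) (hb₁ : b₁ ≠ 0)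
    (hden : b₁ - α * b₂ ≠ 0)
    (s r : ℝ) (hs : s = (b₂ - α * b₁) / (b₁ - α * b₂)) (hr : r = b₂ / b₁) :
    |b₁ + s * b₂| / Real.sqrt (1 + 2 * α * s + s ^ 2)
      = |b₁| * Real.sqrt (1 + (r - α) ^ 2 / (1 - α ^ 2)) := by
  subst hr
  have hα' : 1 - α ^ 2 ≠ 0 := (sub_pos.mpr (sq_lt_one_iff_abs_lt_one α |>.mpr hα)).ne'
  rw [abs_div_sqrt_eq_sqrt (one_add_two_mul_add_sq_pos hα _).ne' (sq_add_div_mul_eq hα' hden hs),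
    ← sq_mul_one_add_div hα' hb₁, Real.sqrt_mul (sq_nonneg b₁), Real.sqrt_sq_eq_abs]
end

section
/- Consider the SAP iteration: let A be a real m×n matrix, x ∈ ℝⁿ, b = A·x with Aᵀ·b ≠ 0, and let A₁, …, A_k be submatrices of A formed by groups of rows of A whose union comprises all rows of A. Define x₀ = (‖b‖²/‖Aᵀ·b‖²)·(Aᵀ·b), and for each s ≥ 0 define recursively p⁽ˢ⁾₀ = x_s and, for i = 1, …, k, p⁽ˢ⁾ᵢ = the orthogonal projection of x onto the subspace spanned by p⁽ˢ⁾ᵢ₋₁ together with the rows of Aᵢ; set x_{s+1} = p⁽ˢ⁾_k. Let x̄ be the orthogonal projection of x onto the row space of A. Then for every s, ‖x_s‖ ≤ ‖x̄‖, and whenever x_s ≠ x̄ one has the strict inequalities ‖x_s‖ < ‖x_{s+1}‖ and ‖x_s‖ < ‖x̄‖. -/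
open scoped RealInnerProductSpace
open Matrix

/-- The subspace spanned by a vector `q` together with the rows of the block of
`A` indexed by `g i`. -/
def sapBlockSubspace {m n : ℕ} (A : Matrix (Fin m) (Fin n) ℝ)
    (g : ℕ → Set (Fin m)) (q : EuclideanSpace ℝ (Fin n)) (i : ℕ) :
    Submodule ℝ (EuclideanSpace ℝ (Fin n)) :=
  Submodule.span ℝ (insert q ((fun j : Fin m => (WithLp.toLp 2 (A j) : EuclideanSpace ℝ (Fin n))) '' g i))

/-!
If `q ∈ W` satisfies `⟪x - q, q⟫ = 0` and `p` is the orthogonal projection of `x` onto `W`, then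
`p - q ⊥ q`, so `‖p‖² = ‖p - q‖² + ‖q‖²`. Every iterate satisfies this relation and lies in the
row space: `x₀` is the projection of `x` onto the line through `Aᵀb` (as `⟪x, Aᵀb⟫ = ‖b‖²`), and
each SAP step projects onto a subspace of the row space containing the previous point. Hence
`‖x_s‖ ≤ ‖x̄‖`, and along a sweep `‖x_{s+1}‖² = ‖x_s‖² + ∑ᵢ ‖pᵢ₊₁ - pᵢ‖²`. If the sweep does not
increase the norm, every `pᵢ` equals `x_s`, so `x - x_s` is orthogonal to every block of rows,
that is, `x_s = x̄`.
-/

section OrthogonalProjection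

variable {E : Type*} [NormedAddCommGroup E] [InnerProductSpace ℝ E]

def IsOrthogonalProjection (W : Submodule ℝ E) (x p : E) : Prop :=
  p ∈ W ∧ ∀ w ∈ W, ⟪x - p, w⟫ = 0

theorem isOrthogonalProjection_starProjection (W : Submodule ℝ E) [W.HasOrthogonalProjection]
    (x : E) : IsOrthogonalProjection W x (W.starProjection x) :=
  ⟨W.starProjection_apply_mem x, W.starProjection_inner_eq_zero x⟩

namespace IsOrthogonalProjection

variable {W : Submodule ℝ E} {x p q : E}

theorem inner_sub_self (hp : IsOrthogonalProjection W x p) : ⟪x - p, p⟫ = 0 :=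
  hp.2 p hp.1

theorem inner_sub_eq_zero (hp : IsOrthogonalProjection W x p) (hq : q ∈ W)
    (hxq : ⟪x - q, q⟫ = 0) : ⟪p - q, q⟫ = 0 := by
  rw [← sub_sub_sub_cancel_left q p x, inner_sub_left, hxq, hp.2 q hq, sub_zero]

theorem unique (hp : IsOrthogonalProjection W x p) (hq : IsOrthogonalProjection W x q) :
    p = q := by
  have hpq : p - q ∈ W := W.sub_mem hp.1 hq.1
  have hself : ⟪p - q, p - q⟫ = 0 := by
    nth_rw 1 [← sub_sub_sub_cancel_left q p x]
    rw [inner_sub_left, hq.2 _ hpq, hp.2 _ hpq, sub_zero]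
  exact sub_eq_zero.mp (inner_self_eq_zero.mp hself)

theorem norm_sq_eq (hp : IsOrthogonalProjection W x p) (hq : q ∈ W) (hxq : ⟪x - q, q⟫ = 0) :
    ‖p‖ ^ 2 = ‖p - q‖ ^ 2 + ‖q‖ ^ 2 := by
  simpa [hp.inner_sub_eq_zero hq hxq] using norm_add_sq_real (p - q) q

theorem norm_le (hp : IsOrthogonalProjection W x p) (hq : q ∈ W) (hxq : ⟪x - q, q⟫ = 0) :
    ‖q‖ ≤ ‖p‖ := by
  rw [← sq_le_sq₀ (norm_nonneg q) (norm_nonneg p), hp.norm_sq_eq hq hxq]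
  exact le_add_of_nonneg_left (sq_nonneg _)

theorem norm_lt (hp : IsOrthogonalProjection W x p) (hq : q ∈ W) (hxq : ⟪x - q, q⟫ = 0)
    (hne : q ≠ p) : ‖q‖ < ‖p‖ := by
  rw [← sq_lt_sq₀ (norm_nonneg q) (norm_nonneg p), hp.norm_sq_eq hq hxq]
  exact lt_add_of_pos_left _ (pow_pos (norm_pos_iff.mpr (sub_ne_zero.mpr hne.symm)) 2)

end IsOrthogonalProjection

section Sweep

variable {x : E} {k : ℕ} {W : ℕ → Submodule ℝ E} {p : ℕ → E}

theorem sweep_inner_sub_self (hproj : ∀ i < k, IsOrthogonalProjection (W i) x (p (i + 1)))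
    (h0 : ⟪x - p 0, p 0⟫ = 0) : ∀ i ≤ k, ⟪x - p i, p i⟫ = 0
  | 0, _ => h0
  | i + 1, hi => (hproj i hi).inner_sub_self

theorem sweep_norm_sq (hproj : ∀ i < k, IsOrthogonalProjection (W i) x (p (i + 1)))
    (hmem : ∀ i < k, p i ∈ W i) (h0 : ⟪x - p 0, p 0⟫ = 0) :
    ‖p k‖ ^ 2 = ‖p 0‖ ^ 2 + ∑ i ∈ Finset.range k, ‖p (i + 1) - p i‖ ^ 2 := by
  induction k with
  | zero => simp
  | succ k ih =>
    rw [Finset.sum_range_succ, ← add_assoc,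
      ← ih (fun i hi => hproj i (by omega)) (fun i hi => hmem i (by omega)), add_comm (‖p k‖ ^ 2)]
    exact (hproj k k.lt_add_one).norm_sq_eq (hmem k k.lt_add_one)
      (sweep_inner_sub_self hproj h0 k k.le_succ)

theorem sweep_eq_of_norm_le (hproj : ∀ i < k, IsOrthogonalProjection (W i) x (p (i + 1)))
    (hmem : ∀ i < k, p i ∈ W i) (h0 : ⟪x - p 0, p 0⟫ = 0) (hle : ‖p k‖ ≤ ‖p 0‖) :
    ∀ i ≤ k, p i = p 0 := by
  have hsum : ∑ i ∈ Finset.range k, ‖p (i + 1) - p i‖ ^ 2 = 0 := by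
    have hsq := pow_le_pow_left₀ (norm_nonneg _) hle 2
    have hnonneg := Finset.sum_nonneg fun i (_ : i ∈ Finset.range k) => sq_nonneg ‖p (i + 1) - p i‖
    linarith [sweep_norm_sq hproj hmem h0]
  have hstep : ∀ i < k, p (i + 1) = p i := fun i hi => by
    have hi0 := (Finset.sum_eq_zero_iff_of_nonneg fun i _ => sq_nonneg _).mp hsum i
      (Finset.mem_range.mpr hi)
    simpa [sub_eq_zero] using hi0
  intro i hi
  induction i with
  | zero => rfl
  | succ i ih => rw [hstep i hi, ih (by omega)]

end Sweep

end OrthogonalProjection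

section RowSpace

variable {m n : Type*} [Fintype m] (A : Matrix m n ℝ)

def euclideanRowSpace : Submodule ℝ (EuclideanSpace ℝ n) :=
  Submodule.span ℝ (Set.range fun j : m => (WithLp.toLp 2 (A j) : EuclideanSpace ℝ n))

variable {A} {x v : EuclideanSpace ℝ n} {b : EuclideanSpace ℝ m}

theorem mem_euclideanRowSpace_of_ofLp_eq (hv : v.ofLp = Aᵀ *ᵥ b.ofLp) :
    v ∈ euclideanRowSpace A := by
  rw [← WithLp.toLp_ofLp (p := 2) v, hv, mulVec_transpose, vecMul_eq_sum, WithLp.toLp_sum]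
  exact Submodule.sum_mem _ fun j _ => Submodule.smul_mem _ _ (Submodule.subset_span ⟨j, rfl⟩)

theorem real_inner_eq_norm_sq_of_ofLp_eq [Fintype n] (hb : b.ofLp = A *ᵥ x.ofLp)
    (hv : v.ofLp = Aᵀ *ᵥ b.ofLp) : ⟪v, x⟫ = ‖b‖ ^ 2 := by
  rw [← real_inner_self_eq_norm_sq, EuclideanSpace.inner_eq_star_dotProduct,
    EuclideanSpace.inner_eq_star_dotProduct, hv, hb, star_trivial, star_trivial,
    mulVec_transpose, dotProduct_mulVec, dotProduct_comm]

theorem isOrthogonalProjection_span_singleton_of_ofLp_eq [Fintype n] (hb : b.ofLp = A *ᵥ x.ofLp)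
    (hv : v.ofLp = Aᵀ *ᵥ b.ofLp) :
    IsOrthogonalProjection (ℝ ∙ v) x ((‖b‖ ^ 2 / ‖v‖ ^ 2) • v) := by
  have hproj := isOrthogonalProjection_starProjection (ℝ ∙ v) x
  rwa [Submodule.starProjection_singleton, RCLike.ofReal_real_eq_id, id,
    real_inner_eq_norm_sq_of_ofLp_eq hb hv] at hproj

end RowSpace

section SAP

variable {m n k : ℕ} {A : Matrix (Fin m) (Fin n) ℝ} {g : ℕ → Set (Fin m)}
  {x : EuclideanSpace ℝ (Fin n)} {p : ℕ → EuclideanSpace ℝ (Fin n)}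

theorem sapBlockSubspace_le_euclideanRowSpace {q : EuclideanSpace ℝ (Fin n)}
    (hq : q ∈ euclideanRowSpace A) (i : ℕ) : sapBlockSubspace A g q i ≤ euclideanRowSpace A := by
  refine Submodule.span_le.mpr (Set.insert_subset hq ?_)
  rintro _ ⟨j, -, rfl⟩
  exact Submodule.subset_span ⟨j, rfl⟩

theorem self_mem_sapBlockSubspace (q : EuclideanSpace ℝ (Fin n)) (i : ℕ) :
    q ∈ sapBlockSubspace A g q i :=
  Submodule.subset_span (Set.mem_insert q _)

theorem sap_sweep_mem_euclideanRowSpace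
    (hproj : ∀ i < k, IsOrthogonalProjection (sapBlockSubspace A g (p i) i) x (p (i + 1)))
    (h0 : p 0 ∈ euclideanRowSpace A) : ∀ i ≤ k, p i ∈ euclideanRowSpace A
  | 0, _ => h0
  | i + 1, hi => sapBlockSubspace_le_euclideanRowSpace
      (sap_sweep_mem_euclideanRowSpace hproj h0 i (by omega)) i (hproj i hi).1

theorem isOrthogonalProjection_of_sap_sweep_const (hcover : ∀ j : Fin m, ∃ i < k, j ∈ g i)
    (hproj : ∀ i < k, IsOrthogonalProjection (sapBlockSubspace A g (p i) i) x (p (i + 1)))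
    (hconst : ∀ i ≤ k, p i = p 0) (h0 : p 0 ∈ euclideanRowSpace A) :
    IsOrthogonalProjection (euclideanRowSpace A) x (p 0) := by
  have horth : euclideanRowSpace A ≤ (ℝ ∙ (x - p 0))ᗮ := by
    refine Submodule.span_le.mpr ?_
    rintro _ ⟨j, rfl⟩
    obtain ⟨i, hi, hj⟩ := hcover j
    have hrow := (hproj i hi).2 _ (Submodule.subset_span (Set.mem_insert_of_mem _ ⟨j, hj, rfl⟩))
    rw [hconst (i + 1) hi] at hrow
    exact Submodule.mem_orthogonal_singleton_iff_inner_right.mpr hrow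
  exact ⟨h0, fun w hw => Submodule.mem_orthogonal_singleton_iff_inner_right.mp (horth hw)⟩

end SAP

theorem sap_monotone_norms_general {m n k : ℕ}
    (A : Matrix (Fin m) (Fin n) ℝ) (x : EuclideanSpace ℝ (Fin n))
    (b : EuclideanSpace ℝ (Fin m)) (hb : b = A.mulVec x)
    (Atb : EuclideanSpace ℝ (Fin n)) (hAtb : Atb = Aᵀ.mulVec b)
    (g : ℕ → Set (Fin m)) (hcover : ∀ j : Fin m, ∃ i < k, j ∈ g i)
    (xseq : ℕ → EuclideanSpace ℝ (Fin n))
    (h0 : xseq 0 = (‖b‖ ^ 2 / ‖Atb‖ ^ 2) • Atb)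
    (hstep : ∀ s : ℕ, ∃ p : ℕ → EuclideanSpace ℝ (Fin n),
      p 0 = xseq s ∧ p k = xseq (s + 1) ∧
      ∀ i < k, p (i + 1) ∈ sapBlockSubspace A g (p i) i ∧
        ∀ w ∈ sapBlockSubspace A g (p i) i, ⟪x - p (i + 1), w⟫ = 0)
    (xbar : EuclideanSpace ℝ (Fin n))
    (hxbarmem : xbar ∈ Submodule.span ℝ
      (Set.range fun j : Fin m => (WithLp.toLp 2 (A j) : EuclideanSpace ℝ (Fin n))))
    (hxbarorth : ∀ w ∈ Submodule.span ℝ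
      (Set.range fun j : Fin m => (WithLp.toLp 2 (A j) : EuclideanSpace ℝ (Fin n))),
      ⟪x - xbar, w⟫ = 0) :
    ∀ s : ℕ, ‖xseq s‖ ≤ ‖xbar‖ ∧
      (xseq s ≠ xbar → ‖xseq s‖ < ‖xseq (s + 1)‖ ∧ ‖xseq s‖ < ‖xbar‖) := by
  have hxbar : IsOrthogonalProjection (euclideanRowSpace A) x xbar := ⟨hxbarmem, hxbarorth⟩
  have hx₀ := isOrthogonalProjection_span_singleton_of_ofLp_eq hb hAtb
  rw [← h0] at hx₀
  have hinv : ∀ s, xseq s ∈ euclideanRowSpace A ∧ ⟪x - xseq s, xseq s⟫ = 0 := by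
    intro s
    induction s with
    | zero =>
      exact ⟨(Submodule.span_singleton_le_iff_mem _ _).mpr
        (mem_euclideanRowSpace_of_ofLp_eq hAtb) hx₀.1, hx₀.inner_sub_self⟩
    | succ s ih =>
      obtain ⟨p, hp0, hpk, hproj⟩ := hstep s
      rw [← hp0] at ih
      rw [← hpk]
      exact ⟨sap_sweep_mem_euclideanRowSpace hproj ih.1 k le_rfl,
        sweep_inner_sub_self hproj ih.2 k le_rfl⟩
  intro s
  obtain ⟨hmem, horth⟩ := hinv s
  refine ⟨hxbar.norm_le hmem horth, fun hne => ⟨?_, hxbar.norm_lt hmem horth hne⟩⟩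
  obtain ⟨p, hp0, hpk, hproj⟩ := hstep s
  rw [← hp0] at hmem horth hne ⊢
  rw [← hpk]
  by_contra! hle
  have hconst := sweep_eq_of_norm_le hproj (fun i _ => self_mem_sapBlockSubspace (p i) i) horth hle
  exact hne ((isOrthogonalProjection_of_sap_sweep_const hcover hproj hconst hmem).unique hxbar)

/-- along the SAP iteration, `‖x_s‖ ≤ ‖x̄‖` for every `s`, and
whenever `x_s ≠ x̄` one has the strict inequalities `‖x_s‖ < ‖x_{s+1}‖` and
`‖x_s‖ < ‖x̄‖`, where `x̄` is the orthogonal projection of `x` onto the row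
space of `A`. -/
theorem sap_monotone_norms {m n k : ℕ}
    (A : Matrix (Fin m) (Fin n) ℝ) (x : EuclideanSpace ℝ (Fin n))
    (b : EuclideanSpace ℝ (Fin m)) (hb : b = A.mulVec x)
    (Atb : EuclideanSpace ℝ (Fin n)) (hAtb : Atb = Aᵀ.mulVec b) (hne : Atb ≠ 0)
    (g : ℕ → Set (Fin m)) (hcover : ∀ j : Fin m, ∃ i < k, j ∈ g i)
    (xseq : ℕ → EuclideanSpace ℝ (Fin n))
    (h0 : xseq 0 = (‖b‖ ^ 2 / ‖Atb‖ ^ 2) • Atb)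
    (hstep : ∀ s : ℕ, ∃ p : ℕ → EuclideanSpace ℝ (Fin n),
      p 0 = xseq s ∧ p k = xseq (s + 1) ∧
      ∀ i < k, p (i + 1) ∈ sapBlockSubspace A g (p i) i ∧
        ∀ w ∈ sapBlockSubspace A g (p i) i, ⟪x - p (i + 1), w⟫ = 0)
    (xbar : EuclideanSpace ℝ (Fin n))
    (hxbarmem : xbar ∈ Submodule.span ℝ
      (Set.range fun j : Fin m => (WithLp.toLp 2 (A j) : EuclideanSpace ℝ (Fin n))))
    (hxbarorth : ∀ w ∈ Submodule.span ℝ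
      (Set.range fun j : Fin m => (WithLp.toLp 2 (A j) : EuclideanSpace ℝ (Fin n))),
      ⟪x - xbar, w⟫ = 0) :
    ∀ s : ℕ, ‖xseq s‖ ≤ ‖xbar‖ ∧
      (xseq s ≠ xbar → ‖xseq s‖ < ‖xseq (s + 1)‖ ∧ ‖xseq s‖ < ‖xbar‖) :=
  sap_monotone_norms_general A x b hb Atb hAtb g hcover xseq h0 hstep xbar hxbarmem hxbarorth
end

section
/- Consider the SAP iteration: let A be a real m×n matrix, x ∈ ℝⁿ, b = A·x with Aᵀ·b ≠ 0, and let A₁, …, A_k be submatrices of A formed by groups of rows of A whose union comprises all rows of A. Define x₀ = (‖b‖²/‖Aᵀ·b‖²)·(Aᵀ·b), and for each s ≥ 0 define recursively p⁽ˢ⁾₀ = x_s and, for i = 1, …, k, p⁽ˢ⁾ᵢ = the orthogonal projection of x onto the subspace spanned by p⁽ˢ⁾ᵢ₋₁ together with the rows of Aᵢ; set x_{s+1} = p⁽ˢ⁾_k. Then the sequence (x_s) converges to x̄, the orthogonal projection of x onto the row space of A. In particular, if m = n and A is invertible, then (x_s) converges to x itself. -/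
open scoped RealInnerProductSpace
open Matrix Filter Topology

/-!
Each projection step is an orthogonal projection of `x` onto a subspace containing the previous
point, so by Pythagoras `‖x - xₛ‖²` decreases by at least the sum of the squared step lengths of
the `s`-th sweep. Hence `‖x - xₛ‖²` converges, the steps of a sweep tend to `0`, and every
intermediate point of the sweep stays close to `xₛ`. Since `x - p⁽ˢ⁾ᵢ` is orthogonal to the rows
of `Aᵢ` and every row lies in some block, `⟪a, xₛ - x̄⟫ → 0` for every row `a`. All iterates lie
in the row space, and in a finite-dimensional space this weak convergence inside a subspace
forces `xₛ → x̄`.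
-/

section Sweep

variable {E : Type*} [NormedAddCommGroup E] [InnerProductSpace ℝ E]

theorem norm_sub_sq_eq_add_of_inner_eq_zero {K : Submodule ℝ E} {x p q : E} (hp : p ∈ K)
    (hq : q ∈ K) (horth : ∀ w ∈ K, ⟪x - p, w⟫ = 0) :
    ‖x - q‖ ^ 2 = ‖x - p‖ ^ 2 + ‖p - q‖ ^ 2 := by
  rw [show x - q = (x - p) + (p - q) by abel, norm_add_sq_real, horth _ (K.sub_mem hp hq)]
  ring

theorem norm_sub_sq_eq_add_sum_of_inner_eq_zero {K : ℕ → Submodule ℝ E} {x : E} {p : ℕ → E}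
    {k : ℕ} (hp : ∀ i < k, p i ∈ K i ∧ p (i + 1) ∈ K i ∧ ∀ w ∈ K i, ⟪x - p (i + 1), w⟫ = 0) :
    ‖x - p 0‖ ^ 2 = ‖x - p k‖ ^ 2 + ∑ i ∈ Finset.range k, ‖p (i + 1) - p i‖ ^ 2 := by
  induction k with
  | zero => simp
  | succ k ih =>
    obtain ⟨hpk, hpk1, horth⟩ := hp k k.lt_succ_self
    rw [ih fun i hi => hp i (by omega), norm_sub_sq_eq_add_of_inner_eq_zero hpk1 hpk horth,
      Finset.sum_range_succ]
    ring

theorem norm_sub_le_of_inner_eq_zero {K : ℕ → Submodule ℝ E} {x : E} {p : ℕ → E} {k j : ℕ}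
    (hp : ∀ i < k, p i ∈ K i ∧ p (i + 1) ∈ K i ∧ ∀ w ∈ K i, ⟪x - p (i + 1), w⟫ = 0)
    (hj : j ≤ k) :
    ‖p j - p 0‖ ≤ k * √(‖x - p 0‖ ^ 2 - ‖x - p k‖ ^ 2) := by
  have hD : ‖x - p 0‖ ^ 2 - ‖x - p k‖ ^ 2 = ∑ i ∈ Finset.range k, ‖p (i + 1) - p i‖ ^ 2 := by
    rw [norm_sub_sq_eq_add_sum_of_inner_eq_zero hp, add_sub_cancel_left]
  set D := ‖x - p 0‖ ^ 2 - ‖x - p k‖ ^ 2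
  have hstep : ∀ i < k, dist (p i) (p (i + 1)) ≤ √D := by
    intro i hi
    rw [hD, dist_comm, dist_eq_norm]
    exact Real.le_sqrt_of_sq_le <| Finset.single_le_sum (f := fun i => ‖p (i + 1) - p i‖ ^ 2)
      (fun _ _ => sq_nonneg _) (Finset.mem_range.2 hi)
  calc ‖p j - p 0‖ = dist (p 0) (p j) := by rw [dist_comm, dist_eq_norm]
    _ ≤ ∑ i ∈ Finset.range j, dist (p i) (p (i + 1)) := dist_le_range_sum_dist p j
    _ ≤ ∑ _i ∈ Finset.range j, √D :=
        Finset.sum_le_sum fun i hi => hstep i (by rw [Finset.mem_range] at hi; omega)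
    _ ≤ k * √D := by
        rw [Finset.sum_const, Finset.card_range, nsmul_eq_mul]
        gcongr

theorem tendsto_sub_succ_of_antitone {f : ℕ → ℝ} (hf : Antitone f)
    (hbdd : BddBelow (Set.range f)) :
    Tendsto (fun s => f s - f (s + 1)) atTop (𝓝 0) := by
  have hlim := tendsto_atTop_ciInf hf hbdd
  simpa using hlim.sub (hlim.comp (tendsto_add_atTop_nat 1))

theorem tendsto_sub_of_sweeps {K : ℕ → ℕ → Submodule ℝ E} {x : E} {xseq : ℕ → E}
    {P : ℕ → ℕ → E} {k : ℕ} (hP0 : ∀ s, P s 0 = xseq s) (hPk : ∀ s, P s k = xseq (s + 1))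
    (hP : ∀ s, ∀ i < k,
      P s i ∈ K s i ∧ P s (i + 1) ∈ K s i ∧ ∀ w ∈ K s i, ⟪x - P s (i + 1), w⟫ = 0)
    {j : ℕ} (hj : j ≤ k) :
    Tendsto (fun s => xseq s - P s j) atTop (𝓝 0) := by
  set f : ℕ → ℝ := fun s => ‖x - xseq s‖ ^ 2
  have hsweep : ∀ s, f (s + 1) ≤ f s := fun s => by
    have hpyth := norm_sub_sq_eq_add_sum_of_inner_eq_zero (hP s)
    rw [hP0, hPk] at hpyth
    have hsum := Finset.sum_nonneg fun i (_ : i ∈ Finset.range k) =>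
      sq_nonneg ‖P s (i + 1) - P s i‖
    simp only [f]
    linarith
  have hdecay := tendsto_sub_succ_of_antitone (antitone_nat_of_succ_le hsweep)
    ⟨0, by rintro _ ⟨s, rfl⟩; positivity⟩
  have hbound : Tendsto (fun s => k * √(f s - f (s + 1))) atTop (𝓝 0) := by
    simpa using ((Real.continuous_sqrt.tendsto 0).comp hdecay).const_mul (k : ℝ)
  refine squeeze_zero_norm (fun s => ?_) hbound
  have := norm_sub_le_of_inner_eq_zero (hP s) hj
  rwa [hP0, hPk, ← norm_sub_rev] at this

theorem mem_of_mem_span_insert_chain {W : Submodule ℝ E} {T : ℕ → Set E} {p : ℕ → E} {k : ℕ}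
    (hT : ∀ i < k, T i ⊆ W) (h0 : p 0 ∈ W)
    (hp : ∀ i < k, p (i + 1) ∈ Submodule.span ℝ (insert (p i) (T i))) {j : ℕ} (hj : j ≤ k) :
    p j ∈ W := by
  induction j with
  | zero => exact h0
  | succ j ih =>
    exact Submodule.span_le.2 (Set.insert_subset (ih (by omega)) (hT j (by omega)))
      (hp j (by omega))

theorem tendsto_zero_of_forall_tendsto_inner [FiniteDimensional ℝ E] {v : ℕ → E}
    (h : ∀ w, Tendsto (fun s => ⟪w, v s⟫) atTop (𝓝 0)) :
    Tendsto v atTop (𝓝 0) := by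
  let b := stdOrthonormalBasis ℝ E
  have := tendsto_finsetSum Finset.univ fun i _ => (h (b i)).smul_const (b i)
  simpa [b.sum_repr'] using this

theorem tendsto_zero_of_mem_span_of_tendsto_inner [FiniteDimensional ℝ E] {S : Set E}
    {v : ℕ → E} (hv : ∀ s, v s ∈ Submodule.span ℝ S)
    (h : ∀ a ∈ S, Tendsto (fun s => ⟪a, v s⟫) atTop (𝓝 0)) :
    Tendsto v atTop (𝓝 0) := by
  set K := Submodule.span ℝ S
  have hK : ∀ w ∈ K, Tendsto (fun s => ⟪w, v s⟫) atTop (𝓝 0) := by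
    intro w hw
    induction hw using Submodule.span_induction with
    | mem a ha => exact h a ha
    | zero => simp
    | add u w _ _ hu hw => simpa [inner_add_left] using hu.add hw
    | smul c u _ hu => simpa [real_inner_smul_left] using hu.const_mul c
  refine tendsto_zero_of_forall_tendsto_inner fun w =>
    (hK _ (K.starProjection_apply_mem w)).congr fun s => ?_
  rw [Submodule.inner_starProjection_left_eq_right, K.starProjection_eq_self_iff.2 (hv s)]

theorem tendsto_of_sap_sweeps [FiniteDimensional ℝ E] {ι : Type*} {k : ℕ} (a : ι → E)
    (g : ℕ → Set ι) (hcover : ∀ j, ∃ i < k, j ∈ g i) {x xbar : E}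
    (hxbar : xbar ∈ Submodule.span ℝ (Set.range a))
    (hxbar_orth : ∀ w ∈ Submodule.span ℝ (Set.range a), ⟪x - xbar, w⟫ = 0) {xseq : ℕ → E}
    (h0 : xseq 0 ∈ Submodule.span ℝ (Set.range a))
    (hstep : ∀ s, ∃ p : ℕ → E, p 0 = xseq s ∧ p k = xseq (s + 1) ∧
      ∀ i < k, p (i + 1) ∈ Submodule.span ℝ (insert (p i) (a '' g i)) ∧
        ∀ w ∈ Submodule.span ℝ (insert (p i) (a '' g i)), ⟪x - p (i + 1), w⟫ = 0) :
    Tendsto xseq atTop (𝓝 xbar) := by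
  set W := Submodule.span ℝ (Set.range a)
  choose P hP0 hPk hP using hstep
  have hxW : ∀ s, xseq s ∈ W := by
    intro s
    induction s with
    | zero => exact h0
    | succ s ih =>
      rw [← hPk]
      exact mem_of_mem_span_insert_chain
        (fun i _ => (Set.image_subset_range a _).trans Submodule.subset_span) (by rwa [hP0])
        (fun i hi => (hP s i hi).1) le_rfl
  have hclose : ∀ j ≤ k, Tendsto (fun s => xseq s - P s j) atTop (𝓝 0) := fun j hj =>
    tendsto_sub_of_sweeps hP0 hPk
      (fun s i hi => ⟨Submodule.subset_span (Set.mem_insert _ _), hP s i hi⟩) hj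
  have hrow : ∀ j, Tendsto (fun s => ⟪a j, xseq s - xbar⟫) atTop (𝓝 0) := by
    intro j
    obtain ⟨i, hi, hji⟩ := hcover j
    have hlim := (tendsto_const_nhds (x := a j)).inner (𝕜 := ℝ) (hclose (i + 1) hi)
    rw [inner_zero_right] at hlim
    refine hlim.congr fun s => ?_
    have h1 : ⟪a j, x - P s (i + 1)⟫ = 0 := by
      rw [real_inner_comm]
      exact (hP s i hi).2 _ (Submodule.subset_span (Set.mem_insert_of_mem _ ⟨j, hji, rfl⟩))
    have h2 : ⟪a j, x - xbar⟫ = 0 := by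
      rw [real_inner_comm]
      exact hxbar_orth _ (Submodule.subset_span ⟨j, rfl⟩)
    calc ⟪a j, xseq s - P s (i + 1)⟫
        = ⟪a j, xseq s - P s (i + 1)⟫ + (⟪a j, x - xbar⟫ - ⟪a j, x - P s (i + 1)⟫) := by
          rw [h1, h2, sub_zero, add_zero]
      _ = ⟪a j, xseq s - xbar⟫ := by
          rw [← inner_sub_right, ← inner_add_right]
          congr 1
          abel
  exact tendsto_sub_nhds_zero_iff.1 <| tendsto_zero_of_mem_span_of_tendsto_inner
    (fun s => W.sub_mem (hxW s) hxbar) (by rintro _ ⟨j, rfl⟩; exact hrow j)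

end Sweep

theorem Matrix.toLp_transpose_mulVec_mem_span_rows {m n : Type*} [Fintype m] [Fintype n]
    (A : Matrix m n ℝ) (c : m → ℝ) :
    WithLp.toLp 2 (Aᵀ *ᵥ c) ∈
      Submodule.span ℝ (Set.range fun j => (WithLp.toLp 2 (A j) : EuclideanSpace ℝ n)) := by
  refine (Submodule.mem_span_range_iff_exists_fun ℝ).2 ⟨c, ?_⟩
  ext i
  simp [mulVec, dotProduct, Finset.sum_apply, mul_comm]

theorem Matrix.span_rows_eq_top_of_isUnit {n : Type*} [Fintype n] [DecidableEq n]
    {A : Matrix n n ℝ} (hA : IsUnit A) :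
    Submodule.span ℝ (Set.range fun j => (WithLp.toLp 2 (A j) : EuclideanSpace ℝ n)) = ⊤ := by
  refine eq_top_iff.2 fun v _ => ?_
  have hAt : IsUnit Aᵀ.det := by rwa [det_transpose, ← isUnit_iff_isUnit_det]
  have hv : v = WithLp.toLp 2 (Aᵀ *ᵥ (Aᵀ⁻¹ *ᵥ v.ofLp)) := by
    rw [mulVec_mulVec, mul_nonsing_inv _ hAt, one_mulVec, WithLp.toLp_ofLp]
  rw [hv]
  exact A.toLp_transpose_mulVec_mem_span_rows _

theorem sap_convergence_general {m n k : ℕ}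
    (A : Matrix (Fin m) (Fin n) ℝ) (x : EuclideanSpace ℝ (Fin n))
    (b : EuclideanSpace ℝ (Fin m))
    (Atb : EuclideanSpace ℝ (Fin n)) (hAtb : Atb = Aᵀ.mulVec b)
    (g : ℕ → Set (Fin m)) (hcover : ∀ j : Fin m, ∃ i < k, j ∈ g i)
    (xseq : ℕ → EuclideanSpace ℝ (Fin n))
    (h0 : xseq 0 = (‖b‖ ^ 2 / ‖Atb‖ ^ 2) • Atb)
    (hstep : ∀ s : ℕ, ∃ p : ℕ → EuclideanSpace ℝ (Fin n),
      p 0 = xseq s ∧ p k = xseq (s + 1) ∧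
      ∀ i < k, p (i + 1) ∈ sapBlockSubspace A g (p i) i ∧
        ∀ w ∈ sapBlockSubspace A g (p i) i, ⟪x - p (i + 1), w⟫ = 0)
    (xbar : EuclideanSpace ℝ (Fin n))
    (hxbarmem : xbar ∈ Submodule.span ℝ
      (Set.range fun j : Fin m => (WithLp.toLp 2 (A j) : EuclideanSpace ℝ (Fin n))))
    (hxbarorth : ∀ w ∈ Submodule.span ℝ
      (Set.range fun j : Fin m => (WithLp.toLp 2 (A j) : EuclideanSpace ℝ (Fin n))),
      ⟪x - xbar, w⟫ = 0) :
    Tendsto xseq atTop (𝓝 xbar) ∧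
      (∀ hmn : m = n, IsUnit (A.submatrix id (Fin.cast hmn)) →
        Tendsto xseq atTop (𝓝 x)) := by
  have h0W : xseq 0 ∈ Submodule.span ℝ
      (Set.range fun j : Fin m => (WithLp.toLp 2 (A j) : EuclideanSpace ℝ (Fin n))) := by
    rw [h0, show Atb = WithLp.toLp 2 (Aᵀ *ᵥ b.ofLp) by rw [← hAtb, WithLp.toLp_ofLp]]
    exact Submodule.smul_mem _ _ (A.toLp_transpose_mulVec_mem_span_rows b)
  have hlim := tendsto_of_sap_sweeps _ g hcover hxbarmem hxbarorth h0W hstep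
  refine ⟨hlim, fun hmn hA => ?_⟩
  subst hmn
  rw [Fin.cast_refl, submatrix_id_id] at hA
  have hx : x - xbar = 0 := inner_self_eq_zero.1 <|
    hxbarorth _ ((span_rows_eq_top_of_isUnit hA).symm ▸ Submodule.mem_top)
  rwa [sub_eq_zero.1 hx]

/-- the SAP iterates `(x_s)` converge to `x̄`, the orthogonal
projection of `x` onto the row space of `A`; in particular, if `m = n` and `A`
is invertible, they converge to `x` itself. -/
theorem sap_convergence {m n k : ℕ}
    (A : Matrix (Fin m) (Fin n) ℝ) (x : EuclideanSpace ℝ (Fin n))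
    (b : EuclideanSpace ℝ (Fin m)) (hb : b = A.mulVec x)
    (Atb : EuclideanSpace ℝ (Fin n)) (hAtb : Atb = Aᵀ.mulVec b) (hne : Atb ≠ 0)
    (g : ℕ → Set (Fin m)) (hcover : ∀ j : Fin m, ∃ i < k, j ∈ g i)
    (xseq : ℕ → EuclideanSpace ℝ (Fin n))
    (h0 : xseq 0 = (‖b‖ ^ 2 / ‖Atb‖ ^ 2) • Atb)
    (hstep : ∀ s : ℕ, ∃ p : ℕ → EuclideanSpace ℝ (Fin n),
      p 0 = xseq s ∧ p k = xseq (s + 1) ∧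
      ∀ i < k, p (i + 1) ∈ sapBlockSubspace A g (p i) i ∧
        ∀ w ∈ sapBlockSubspace A g (p i) i, ⟪x - p (i + 1), w⟫ = 0)
    (xbar : EuclideanSpace ℝ (Fin n))
    (hxbarmem : xbar ∈ Submodule.span ℝ
      (Set.range fun j : Fin m => (WithLp.toLp 2 (A j) : EuclideanSpace ℝ (Fin n))))
    (hxbarorth : ∀ w ∈ Submodule.span ℝ
      (Set.range fun j : Fin m => (WithLp.toLp 2 (A j) : EuclideanSpace ℝ (Fin n))),
      ⟪x - xbar, w⟫ = 0) :
    Tendsto xseq atTop (𝓝 xbar) ∧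
      (∀ hmn : m = n, IsUnit (A.submatrix id (Fin.cast hmn)) →
        Tendsto xseq atTop (𝓝 x)) :=
  sap_convergence_general A x b Atb hAtb g hcover xseq h0 hstep xbar hxbarmem hxbarorth
end
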